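/- Laplacian comparison: Let G be a locally finite weighted graph, x₀ ∈ V, and suppose κ(x₀,y) ≥ K for all y ≠ x₀. Then Δd(x₀,·)(y) ≤ Deg(x₀) − K·d(x₀,y) for all y ∈ V. -/

import Mathlib

open scoped BigOperators

/-- A locally finite weighted graph. -/
structure WeightedGraph (V : Type) where
  w : V → V → ℝ
  m : V → ℝ
  symm : ∀ x y, w x y = w y x
  loopless : ∀ x, w x x = 0
  nonneg : ∀ x y, 0 ≤ w x y
  mpos : ∀ x, 0 < m x
  locFin : ∀ x, Set.Finite {y | w x y ≠ 0}

namespace WeightedGraph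

variable {V : Type} (G : WeightedGraph V)

/-- The underlying simple graph. -/
def toSimple : SimpleGraph V where
  Adj x y := x ≠ y ∧ G.w x y ≠ 0
  symm := by
    constructor
    intro x y h
    exact ⟨h.1.symm, by rw [G.symm y x]; exact h.2⟩
  loopless := by constructor; intro x h; exact h.1 rfl

/-- The combinatorial graph distance. -/
noncomputable def dist (x y : V) : ℕ := G.toSimple.dist x y

/-- The graph Laplacian. -/
noncomputable def lap (f : V → ℝ) (x : V) : ℝ :=
  (∑ᶠ y, G.w x y * (f y - f x)) / G.m x

/-- The weighted vertex degree. -/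
noncomputable def deg (x : V) : ℝ := (∑ᶠ y, G.w x y) / G.m x

/-- `f` is `1`-Lipschitz with respect to the combinatorial distance. -/
def Lip1 (f : V → ℝ) : Prop := ∀ x y, |f x - f y| ≤ (G.dist x y : ℝ)

/-- The Ollivier curvature, via the limit-free formula
`κ(x,y) = inf {∇_{xy} Δ f : f ∈ Lip(1) ∩ C_c(V), ∇_{yx} f = 1}`. -/
noncomputable def curv (x y : V) : ℝ :=
  sInf { c | ∃ f : V → ℝ, G.Lip1 f ∧ (Function.support f).Finite ∧
    f y - f x = (G.dist x y : ℝ) ∧ c = (G.lap f x - G.lap f y) / (G.dist x y : ℝ) }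

/-!
Test the curvature at `(x₀, y)` against `d(x₀,·)` itself: since `Δd(x₀,·)(x₀) = Deg(x₀)`, this gives
`κ(x₀,y) ≤ (Deg(x₀) - Δd(x₀,·)(y)) / d(x₀,y)`. As `d(x₀,·)` is not finitely supported, it is replaced by
the tent `(min (d(x₀,·), 2R - d(x₀,·)))⁺` with `R = d(x₀,y) + 1`: it is still `1`-Lipschitz, has finite
support by local finiteness, and agrees with `d(x₀,·)` on the neighbourhoods of `x₀` and `y`, which is all
the two Laplacians see.
-/

lemma adj_of_w_ne_zero {x z : V} (h : G.w x z ≠ 0) : G.toSimple.Adj x z :=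
  ⟨fun he => h (he ▸ G.loopless x), h⟩

lemma dist_eq_one_of_w_ne_zero {x z : V} (h : G.w x z ≠ 0) : G.dist x z = 1 :=
  SimpleGraph.dist_eq_one_iff_adj.mpr (G.adj_of_w_ne_zero h)

lemma finite_setOf_exists_walk_length_le (n : ℕ) (x : V) :
    {z | ∃ p : G.toSimple.Walk x z, p.length ≤ n}.Finite := by
  induction n generalizing x with
  | zero =>
    refine (Set.finite_singleton x).subset ?_
    rintro z ⟨p, hp⟩
    exact (SimpleGraph.Walk.eq_of_length_eq_zero (Nat.le_zero.mp hp)).symm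
  | succ n ih =>
    refine (((G.locFin x).biUnion fun u _ => ih u).union (Set.finite_singleton x)).subset ?_
    rintro z ⟨p, hp⟩
    cases p with
    | nil => exact Or.inr rfl
    | cons h q => exact Or.inl (Set.mem_biUnion h.2 ⟨q, Nat.le_of_succ_le_succ hp⟩)

lemma finite_setOf_dist_le (hconn : G.toSimple.Connected) (x : V) (n : ℕ) :
    {z | G.dist x z ≤ n}.Finite := by
  refine (G.finite_setOf_exists_walk_length_le n x).subset fun z hz => ?_
  obtain ⟨p, hp⟩ := (hconn x z).exists_walk_length_eq_dist
  exact ⟨p, hp ▸ hz⟩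

lemma dist_self (x : V) : G.dist x x = 0 := SimpleGraph.dist_self

lemma dist_comm (x y : V) : G.dist x y = G.dist y x := SimpleGraph.dist_comm

lemma dist_triangle (hconn : G.toSimple.Connected) (x y z : V) :
    G.dist x z ≤ G.dist x y + G.dist y z :=
  hconn.dist_triangle

lemma lap_eq_sum (f : V → ℝ) (x : V) :
    G.lap f x = (∑ z ∈ (G.locFin x).toFinset, G.w x z * (f z - f x)) / G.m x := by
  rw [lap, finsum_eq_sum_of_support_subset_of_finite _ _ (G.locFin x)]
  exact fun z hz h0 => hz (by simp [h0])

lemma deg_eq_sum (x : V) : G.deg x = (∑ z ∈ (G.locFin x).toFinset, G.w x z) / G.m x := by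
  rw [deg, finsum_eq_sum_of_support_subset_of_finite _ _ (G.locFin x)]
  exact fun _ hz => hz

lemma lap_congr {f g : V → ℝ} {x : V} (hx : f x = g x) (h : ∀ z, G.w x z ≠ 0 → f z = g z) :
    G.lap f x = G.lap g x := by
  rw [lap_eq_sum, lap_eq_sum, hx]
  refine congrArg (· / G.m x) (Finset.sum_congr rfl fun z hz => ?_)
  rw [h z ((G.locFin x).mem_toFinset.mp hz)]

namespace Lip1

variable {G} {f g : V → ℝ}

lemma abs_sub_le_one (hf : G.Lip1 f) {x z : V} (hz : G.w x z ≠ 0) : |f z - f x| ≤ 1 := by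
  simpa [G.dist_comm z x, G.dist_eq_one_of_w_ne_zero hz] using hf z x

lemma abs_lap_le_deg (hf : G.Lip1 f) (x : V) : |G.lap f x| ≤ G.deg x := by
  rw [lap_eq_sum, deg_eq_sum, abs_div, abs_of_pos (G.mpos x)]
  refine div_le_div_of_nonneg_right ((Finset.abs_sum_le_sum_abs _ _).trans
    (Finset.sum_le_sum fun z hz => ?_)) (G.mpos x).le
  rw [abs_mul, abs_of_nonneg (G.nonneg x z)]
  exact mul_le_of_le_one_right (G.nonneg x z) (hf.abs_sub_le_one ((G.locFin x).mem_toFinset.mp hz))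

lemma const_sub (hf : G.Lip1 f) (c : ℝ) : G.Lip1 fun z => c - f z := fun x y => by
  simpa [abs_sub_comm] using hf x y

lemma max (hf : G.Lip1 f) (hg : G.Lip1 g) : G.Lip1 fun z => max (f z) (g z) := fun x y =>
  (abs_max_sub_max_le_max _ _ _ _).trans (max_le (hf x y) (hg x y))

lemma min (hf : G.Lip1 f) (hg : G.Lip1 g) : G.Lip1 fun z => min (f z) (g z) := fun x y =>
  (abs_min_sub_min_le_max _ _ _ _).trans (max_le (hf x y) (hg x y))

end Lip1

lemma lip1_const (c : ℝ) : G.Lip1 fun _ => c := fun x y => by simp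

lemma lip1_dist (hconn : G.toSimple.Connected) (x₀ : V) :
    G.Lip1 fun z => (G.dist x₀ z : ℝ) := fun a b => by
  have hab : (G.dist x₀ b : ℝ) ≤ G.dist x₀ a + G.dist a b := by
    exact_mod_cast G.dist_triangle hconn x₀ a b
  have hba : (G.dist x₀ a : ℝ) ≤ G.dist x₀ b + G.dist a b := by
    exact_mod_cast (G.dist_triangle hconn x₀ b a).trans_eq (by rw [G.dist_comm b a])
  exact abs_sub_le_iff.mpr ⟨by linarith, by linarith⟩

lemma lap_dist_self (x₀ : V) : G.lap (fun z => (G.dist x₀ z : ℝ)) x₀ = G.deg x₀ := by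
  rw [lap_eq_sum, deg_eq_sum]
  refine congrArg (· / G.m x₀) (Finset.sum_congr rfl fun z hz => ?_)
  rw [G.dist_eq_one_of_w_ne_zero ((G.locFin x₀).mem_toFinset.mp hz), G.dist_self]
  simp

lemma curv_le {f : V → ℝ} (hf : G.Lip1 f) (hsupp : f.support.Finite) {x y : V}
    (hxy : f y - f x = G.dist x y) : G.curv x y ≤ (G.lap f x - G.lap f y) / G.dist x y := by
  refine csInf_le ⟨(-G.deg x - G.deg y) / G.dist x y, ?_⟩ ⟨f, hf, hsupp, hxy, rfl⟩
  rintro c ⟨g, hg, -, -, rfl⟩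
  have hx := abs_le.mp (hg.abs_lap_le_deg x)
  have hy := abs_le.mp (hg.abs_lap_le_deg y)
  exact div_le_div_of_nonneg_right (by linarith) (Nat.cast_nonneg _)

noncomputable def tentDist (x₀ : V) (R : ℝ) (z : V) : ℝ :=
  max 0 (min (G.dist x₀ z : ℝ) (2 * R - G.dist x₀ z))

lemma tentDist_of_dist_le {x₀ z : V} {R : ℝ} (hz : (G.dist x₀ z : ℝ) ≤ R) :
    G.tentDist x₀ R z = G.dist x₀ z := by
  rw [tentDist, min_eq_left (by linarith), max_eq_right (Nat.cast_nonneg _)]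

lemma lip1_tentDist (hconn : G.toSimple.Connected) (x₀ : V) (R : ℝ) :
    G.Lip1 (G.tentDist x₀ R) :=
  (G.lip1_const 0).max ((G.lip1_dist hconn x₀).min ((G.lip1_dist hconn x₀).const_sub _))

lemma finite_support_tentDist (hconn : G.toSimple.Connected) (x₀ : V) (R : ℕ) :
    (G.tentDist x₀ R).support.Finite := by
  refine (G.finite_setOf_dist_le hconn x₀ (2 * R)).subset fun z hz => ?_
  by_contra hfar
  have h2R : (2 * R : ℝ) ≤ G.dist x₀ z := by exact_mod_cast (not_le.mp hfar).le
  exact hz (max_eq_left ((min_le_right _ _).trans (by linarith)))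

lemma lap_dist_le_of_le_curv (hconn : G.toSimple.Connected) {x₀ y : V} (hy : y ≠ x₀) {K : ℝ}
    (hK : K ≤ G.curv x₀ y) :
    G.lap (fun z => (G.dist x₀ z : ℝ)) y ≤ G.deg x₀ - K * G.dist x₀ y := by
  set d := G.dist x₀ y
  set f := G.tentDist x₀ (d + 1 : ℕ)
  have hd : (0 : ℝ) < d := by exact_mod_cast hconn.pos_dist_of_ne hy.symm
  have hf_eq {z : V} (hz : G.dist x₀ z ≤ d + 1) : f z = G.dist x₀ z :=
    G.tentDist_of_dist_le (by exact_mod_cast hz)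
  have hfx₀ : f x₀ = 0 := by simpa [G.dist_self] using hf_eq (z := x₀) (by simp [G.dist_self])
  have hfy : f y = d := hf_eq (Nat.le_succ d)
  have hlap_x₀ : G.lap f x₀ = G.deg x₀ := by
    rw [← G.lap_dist_self x₀]
    refine G.lap_congr (hfx₀.trans (by simp [G.dist_self])) fun z hz => hf_eq ?_
    rw [G.dist_eq_one_of_w_ne_zero hz]
    omega
  have hlap_y : G.lap f y = G.lap (fun z => (G.dist x₀ z : ℝ)) y :=
    G.lap_congr hfy fun z hz => hf_eq <|
      (G.dist_triangle hconn x₀ y z).trans_eq (by rw [G.dist_eq_one_of_w_ne_zero hz])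
  have hcurv := hK.trans (G.curv_le (f := f) (G.lip1_tentDist hconn x₀ _)
    (G.finite_support_tentDist hconn x₀ _) (by rw [hfy, hfx₀, sub_zero]))
  rw [hlap_x₀, hlap_y, le_div_iff₀ hd] at hcurv
  linarith

end WeightedGraph

theorem stmt12_general {V : Type} (G : WeightedGraph V)
    (hconn : G.toSimple.Connected)
    (x₀ : V) (K : ℝ) (hK : ∀ y, y ≠ x₀ → K ≤ G.curv x₀ y) :
    ∀ y, G.lap (fun z => (G.dist x₀ z : ℝ)) y ≤ G.deg x₀ - K * (G.dist x₀ y : ℝ) := by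
  intro y
  by_cases hy : y = x₀
  · subst hy
    simp [G.lap_dist_self, G.dist_self]
  · exact G.lap_dist_le_of_le_curv hconn hy (hK y hy)

/-- Laplacian comparison: if `κ(x₀,y) ≥ K` for all `y ≠ x₀`, then
`Δ d(x₀,·) ≤ Deg(x₀) - K d(x₀,·)`. -/
theorem stmt12 {V : Type} [Countable V] (G : WeightedGraph V)
    (hconn : G.toSimple.Connected)
    (x₀ : V) (K : ℝ) (hK : ∀ y, y ≠ x₀ → K ≤ G.curv x₀ y) :
    ∀ y, G.lap (fun z => (G.dist x₀ z : ℝ)) y ≤ G.deg x₀ - K * (G.dist x₀ y : ℝ) :=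
  stmt12_general G hconn x₀ K hK
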